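/- For a finite abelian group A, there is a short exact sequence 0 → Hom(A, (1/2)ℤ/ℤ) → Quad(A, ℝ/ℤ) → Hom(S²(A), ℝ/ℤ) → 0, where the second map sends a quadratic form q to its polarization b_q viewed as a homomorphism S²(A) → ℝ/ℤ; in particular the polarization map b is surjective. -/

import Mathlib

variable {A B : Type*} [AddCommGroup A] [AddCommGroup B]

/-- The polarization of a map between abelian groups. -/
def polz (γ : A → B) (x y : A) : B := γ (x + y) - γ x - γ y

/-- A quadratic form between abelian groups: even, with bilinear polarization. -/
def IsQuadratic (γ : A → B) : Prop :=
  (∀ a, γ a = γ (-a)) ∧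
  (∀ x x' y, polz γ (x + x') y = polz γ x y + polz γ x' y) ∧
  (∀ x y y', polz γ x (y + y') = polz γ x y + polz γ x y')

lemma polz_add_fun (f g : A → B) (x y : A) :
    polz (f + g) x y = polz f x y + polz g x y := by
  simp only [polz, Pi.add_apply]; abel

lemma polz_neg_fun (f : A → B) (x y : A) :
    polz (-f) x y = - polz f x y := by
  simp only [polz, Pi.neg_apply]; abel

/-- The group of `ℝ/ℤ`-valued quadratic forms on `A`. -/
noncomputable def QuadGroup (A : Type*) [AddCommGroup A] : AddSubgroup (A → AddCircle (1 : ℝ)) where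
  carrier := {γ | IsQuadratic γ}
  zero_mem' := ⟨fun _ => rfl, fun _ _ _ => by simp [polz], fun _ _ _ => by simp [polz]⟩
  add_mem' := by
    rintro f g ⟨hf1, hf2, hf3⟩ ⟨hg1, hg2, hg3⟩
    refine ⟨fun a => by simp only [Pi.add_apply, hf1 a, hg1 a], fun x x' y => ?_,
      fun x y y' => ?_⟩
    · rw [polz_add_fun, polz_add_fun, polz_add_fun, hf2, hg2]; abel
    · rw [polz_add_fun, polz_add_fun, polz_add_fun, hf3, hg3]; abel
  neg_mem' := by
    rintro f ⟨hf1, hf2, hf3⟩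
    refine ⟨fun a => by simp only [Pi.neg_apply, hf1 a], fun x x' y => ?_, fun x y y' => ?_⟩
    · rw [polz_neg_fun, polz_neg_fun, polz_neg_fun, hf2]; abel
    · rw [polz_neg_fun, polz_neg_fun, polz_neg_fun, hf3]; abel

open TensorProduct

/-- The second symmetric power `S²(A) = (A ⊗ A)/⟨a⊗b - b⊗a⟩` of `A` as a ℤ-module. -/
abbrev symPower2 (A : Type*) [AddCommGroup A] :=
  (TensorProduct ℤ A A) ⧸
    (Submodule.span ℤ {x : TensorProduct ℤ A A | ∃ a b : A, x = a ⊗ₜ[ℤ] b - b ⊗ₜ[ℤ] a})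

/-!
A symmetric biadditive `b : A × A → ℝ/ℤ` is a 2-cocycle, so it defines a central extension
`0 → ℝ/ℤ → E → A → 0` with `(c, a) + (c', a') = (c + c' + b a a', a + a')`, abelian because `b`
is symmetric. As `ℝ/ℤ` is divisible, hence injective, the inclusion `ℝ/ℤ → E` has a retraction
`r`, and `q a = -r (0, a)` satisfies `polz q = b`. The defect `a ↦ q a - q (-a)` is a character
killing the `2`-torsion, so it has the form `a ↦ ψ (2 • a)` for a character `ψ`, again by
injectivity of `ℝ/ℤ`, and `q - ψ` is an even refinement of `b`. The kernel of the polarization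
consists of the even additive maps, i.e. the characters with values in `{0, 1/2}`.
-/

lemma polz_comm (γ : A → B) (x y : A) : polz γ x y = polz γ y x := by
  simp only [polz, add_comm x y]
  abel

lemma map_add_eq_add_add_polz (γ : A → B) (x y : A) : γ (x + y) = γ x + γ y + polz γ x y := by
  rw [polz]
  abel

lemma polz_eq_zero_iff_map_add {γ : A → B} :
    (∀ x y, polz γ x y = 0) ↔ ∀ x y, γ (x + y) = γ x + γ y := by
  simp only [polz, sub_sub, sub_eq_zero]

lemma IsQuadratic.two_nsmul_eq_zero_of_map_add {γ : A → B} (hγ : IsQuadratic γ)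
    (hadd : ∀ x y, γ (x + y) = γ x + γ y) (a : A) : 2 • γ a = 0 := by
  have hzero : γ 0 = 0 := by simpa using hadd 0 0
  rw [two_nsmul]
  nth_rewrite 2 [hγ.1 a]
  rw [← hadd, add_neg_cancel, hzero]

def IsQuadratic.polzHom {γ : A → B} (hγ : IsQuadratic γ) : A →+ A →+ B :=
  AddMonoidHom.mk' (fun x => AddMonoidHom.mk' (polz γ x) (hγ.2.2 x))
    (fun x x' => AddMonoidHom.ext (hγ.2.1 x x'))

lemma isQuadratic_of_even_of_polz_eq {γ : A → B} (b : A →+ A →+ B) (heven : ∀ a, γ a = γ (-a))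
    (hpolz : ∀ x y, polz γ x y = b x y) : IsQuadratic γ :=
  ⟨heven, fun x x' y => by simp only [hpolz, map_add, AddMonoidHom.add_apply],
    fun x y y' => by simp only [hpolz, map_add]⟩

namespace symPower2

abbrev tmul (a b : A) : symPower2 A := Submodule.Quotient.mk (a ⊗ₜ[ℤ] b)

lemma tmul_comm (a b : A) : tmul a b = tmul b a :=
  (Submodule.Quotient.eq _).2 (Submodule.subset_span ⟨a, b, rfl⟩)

lemma hom_ext {C : Type*} [AddCommMonoid C] {f g : symPower2 A →+ C}
    (h : ∀ a b : A, f (tmul a b) = g (tmul a b)) : f = g := by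
  ext x
  obtain ⟨t, rfl⟩ := Submodule.Quotient.mk_surjective _ x
  induction t using TensorProduct.induction_on with
  | zero => simp only [Submodule.Quotient.mk_zero, map_zero]
  | tmul a b => exact h a b
  | add x y hx hy => simp only [Submodule.Quotient.mk_add, map_add, hx, hy]

lemma tmul_add (a b b' : A) : tmul a (b + b') = tmul a b + tmul a b' := by
  rw [tmul, TensorProduct.tmul_add, Submodule.Quotient.mk_add]

lemma add_tmul (a a' b : A) : tmul (a + a') b = tmul a b + tmul a' b := by
  rw [tmul, TensorProduct.add_tmul, Submodule.Quotient.mk_add]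

def lift (b : A →+ A →+ B) (hb : ∀ x y, b x y = b y x) : symPower2 A →+ B :=
  let b' := TensorProduct.liftAddHom b fun n x y => by
    rw [map_zsmul, AddMonoidHom.smul_apply, map_zsmul]
  (Submodule.liftQ _ b'.toIntLinearMap (by
    rw [Submodule.span_le]
    rintro _ ⟨x, y, rfl⟩
    simp [b', hb x y])).toAddMonoidHom

def toBiadditive (φ : symPower2 A →+ B) : A →+ A →+ B :=
  AddMonoidHom.mk' (fun a => AddMonoidHom.mk' (fun b => φ (tmul a b))
      (fun b b' => by rw [tmul_add, map_add]))
    (fun a a' => AddMonoidHom.ext fun b => by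
      simp only [AddMonoidHom.mk'_apply, AddMonoidHom.add_apply, add_tmul, map_add])

end symPower2

structure TwistedProd (b : A →+ A →+ B) where
  fst : B
  snd : A

namespace TwistedProd

variable {b : A →+ A →+ B}

instance : Add (TwistedProd b) := ⟨fun x y => ⟨x.fst + y.fst + b x.snd y.snd, x.snd + y.snd⟩⟩

instance : Zero (TwistedProd b) := ⟨⟨0, 0⟩⟩

instance : Neg (TwistedProd b) := ⟨fun x => ⟨-x.fst + b x.snd x.snd, -x.snd⟩⟩

lemma add_def (x y : TwistedProd b) :
    x + y = ⟨x.fst + y.fst + b x.snd y.snd, x.snd + y.snd⟩ := rfl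

lemma zero_def : (0 : TwistedProd b) = ⟨0, 0⟩ := rfl

lemma neg_def (x : TwistedProd b) : -x = ⟨-x.fst + b x.snd x.snd, -x.snd⟩ := rfl

instance : AddGroup (TwistedProd b) where
  nsmul := nsmulRec
  zsmul := zsmulRec
  add_assoc x y z := by
    simp only [add_def, mk.injEq, map_add, AddMonoidHom.add_apply]
    exact ⟨by abel, add_assoc _ _ _⟩
  zero_add x := by simp only [add_def, zero_def, map_zero, AddMonoidHom.zero_apply, add_zero,
    zero_add]
  add_zero x := by simp only [add_def, zero_def, map_zero, add_zero]
  neg_add_cancel x := by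
    simp only [add_def, neg_def, zero_def, mk.injEq, map_neg, AddMonoidHom.neg_apply,
      neg_add_cancel]
    exact ⟨by abel, trivial⟩

abbrev addCommGroup (hb : ∀ x y, b x y = b y x) : AddCommGroup (TwistedProd b) where
  add_comm x y := by
    simp only [add_def, mk.injEq]
    exact ⟨by rw [hb]; abel, add_comm _ _⟩

variable (b) in
def inl : B →+ TwistedProd b :=
  AddMonoidHom.mk' (fun c => ⟨c, 0⟩) fun _ _ => by simp [add_def]

lemma inl_injective : Function.Injective (inl b) := fun _ _ h => congrArg fst h

end TwistedProd

lemma exists_polz_eq [DivisibleBy B ℤ] (b : A →+ A →+ B) (hb : ∀ x y, b x y = b y x) :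
    ∃ q : A → B, ∀ x y, polz q x y = b x y := by
  let _ := TwistedProd.addCommGroup hb
  obtain ⟨r, hr⟩ := (Module.Baer.of_divisible B).extension_property_addMonoidHom
    (TwistedProd.inl b) TwistedProd.inl_injective (AddMonoidHom.id B)
  refine ⟨fun a => -r ⟨0, a⟩, fun x y => ?_⟩
  have hsplit : r ⟨0, x⟩ + r ⟨0, y⟩ = b x y + r ⟨0, x + y⟩ := by
    have : (⟨0, x⟩ : TwistedProd b) + ⟨0, y⟩ = TwistedProd.inl b (b x y) + ⟨0, x + y⟩ := by
      simp [TwistedProd.add_def, TwistedProd.inl]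
    rw [← map_add r, this, map_add, ← AddMonoidHom.comp_apply, hr, AddMonoidHom.id_apply]
  calc polz (fun a => -r ⟨0, a⟩) x y = (r ⟨0, x⟩ + r ⟨0, y⟩) - r ⟨0, x + y⟩ := by
        simp only [polz]; abel
    _ = b x y := by rw [hsplit]; abel

lemma exists_comp_nsmul_eq [DivisibleBy B ℤ] (n : ℕ) (f : A →+ B)
    (hf : ∀ a, n • a = 0 → f a = 0) : ∃ g : A →+ B, ∀ a, g (n • a) = f a := by
  let d := nsmulAddMonoidHom (α := A) n
  obtain ⟨g, hg⟩ := (Module.Baer.of_divisible B).extension_property_addMonoidHom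
    (QuotientAddGroup.kerLift d) (QuotientAddGroup.kerLift_injective d)
    (QuotientAddGroup.lift d.ker f hf)
  exact ⟨g, fun a => DFunLike.congr_fun hg (a : A ⧸ d.ker)⟩

lemma exists_even_polz_eq [DivisibleBy B ℤ] {q : A → B} (b : A →+ A →+ B)
    (hq : ∀ x y, polz q x y = b x y) :
    ∃ q' : A → B, (∀ a, q' a = q' (-a)) ∧ ∀ x y, polz q' x y = b x y := by
  let χ : A →+ B := AddMonoidHom.mk' (fun a => q a - q (-a)) fun x y => by
    rw [neg_add, map_add_eq_add_add_polz q, map_add_eq_add_add_polz q (-x), hq, hq]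
    simp only [map_neg, AddMonoidHom.neg_apply, neg_neg]
    abel
  have hχ : ∀ a, 2 • a = 0 → χ a = 0 := fun a ha => by
    have : -a = a := by rw [neg_eq_iff_add_eq_zero, ← two_nsmul, ha]
    simp [χ, this]
  obtain ⟨ψ, hψ⟩ := exists_comp_nsmul_eq 2 χ hχ
  refine ⟨fun a => q a - ψ a, fun a => ?_, fun x y => ?_⟩
  · have h2 : ψ a + ψ a = q a - q (-a) := by rw [← map_add, ← two_nsmul, hψ]; rfl
    calc q a - ψ a = q (-a) + (ψ a + ψ a) - ψ a := by rw [h2]; abel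
      _ = q (-a) - ψ (-a) := by rw [map_neg]; abel
  · rw [← hq]
    simp only [polz, map_add]
    abel

lemma exists_isQuadratic_polz_eq [DivisibleBy B ℤ] (b : A →+ A →+ B)
    (hb : ∀ x y, b x y = b y x) : ∃ q : A → B, IsQuadratic q ∧ ∀ x y, polz q x y = b x y := by
  obtain ⟨q, hq⟩ := exists_polz_eq b hb
  obtain ⟨q', heven, hq'⟩ := exists_even_polz_eq b hq
  exact ⟨q', isQuadratic_of_even_of_polz_eq b heven hq', hq'⟩

noncomputable def polarization (A : Type*) [AddCommGroup A] :
    QuadGroup A →+ (symPower2 A →+ AddCircle (1 : ℝ)) :=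
  AddMonoidHom.mk'
    (fun q => symPower2.lift (IsQuadratic.polzHom q.2) (polz_comm (q : A → AddCircle (1 : ℝ))))
    fun q q' => symPower2.hom_ext fun a b => polz_add_fun (q : A → AddCircle (1 : ℝ)) q' a b

lemma polarization_tmul (q : QuadGroup A) (a b : A) :
    polarization A q (symPower2.tmul a b) = polz (q : A → AddCircle (1 : ℝ)) a b :=
  rfl

lemma polarization_surjective (A : Type*) [AddCommGroup A] :
    Function.Surjective (polarization A) := fun φ => by
  obtain ⟨q, hq, hpolz⟩ := exists_isQuadratic_polz_eq (symPower2.toBiadditive φ)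
    fun x y => congrArg φ (symPower2.tmul_comm x y)
  exact ⟨⟨q, hq⟩, symPower2.hom_ext hpolz⟩

lemma mem_ker_polarization_iff (q : QuadGroup A) :
    q ∈ (polarization A).ker ↔
      (∀ x y, (q : A → AddCircle (1 : ℝ)) (x + y) = (q : A → AddCircle (1 : ℝ)) x +
        (q : A → AddCircle (1 : ℝ)) y) ∧
        ∀ a, 2 • (q : A → AddCircle (1 : ℝ)) a = 0 := by
  have hzero : polarization A q = 0 ↔ ∀ x y, polz (q : A → AddCircle (1 : ℝ)) x y = 0 :=
    ⟨fun h x y => DFunLike.congr_fun h (symPower2.tmul x y), fun h => symPower2.hom_ext h⟩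
  rw [AddMonoidHom.mem_ker, hzero, polz_eq_zero_iff_map_add]
  exact ⟨fun h => ⟨h, IsQuadratic.two_nsmul_eq_zero_of_map_add q.2 h⟩, And.left⟩

theorem polarization_exact_sequence_general (A : Type*) [AddCommGroup A] :
    ∃ β : QuadGroup A →+ (symPower2 A →+ AddCircle (1 : ℝ)),
      (∀ (q : QuadGroup A) (a b : A),
        β q (Submodule.Quotient.mk (a ⊗ₜ[ℤ] b)) =
          polz (q : A → AddCircle (1 : ℝ)) a b) ∧
      Function.Surjective β ∧
      (∀ q : QuadGroup A, q ∈ β.ker ↔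
        ((∀ x y : A, (q : A → AddCircle (1 : ℝ)) (x + y) =
            (q : A → AddCircle (1 : ℝ)) x + (q : A → AddCircle (1 : ℝ)) y) ∧
         ∀ a : A, (2 : ℕ) • (q : A → AddCircle (1 : ℝ)) a = 0)) :=
  ⟨polarization A, polarization_tmul, polarization_surjective A, mem_ker_polarization_iff⟩

/-- For a finite abelian group `A`, there is a short exact sequence
`0 → Hom(A, (1/2)ℤ/ℤ) → Quad(A, ℝ/ℤ) → Hom(S²(A), ℝ/ℤ) → 0`, where the second map sends
a quadratic form to its polarization: the polarization map is surjective and its kernel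
consists exactly of the homomorphisms `A → {0, 1/2} ⊂ ℝ/ℤ`. -/
theorem polarization_exact_sequence (A : Type*) [AddCommGroup A] [Finite A] :
    ∃ β : QuadGroup A →+ (symPower2 A →+ AddCircle (1 : ℝ)),
      (∀ (q : QuadGroup A) (a b : A),
        β q (Submodule.Quotient.mk (a ⊗ₜ[ℤ] b)) =
          polz (q : A → AddCircle (1 : ℝ)) a b) ∧
      Function.Surjective β ∧
      (∀ q : QuadGroup A, q ∈ β.ker ↔
        ((∀ x y : A, (q : A → AddCircle (1 : ℝ)) (x + y) =
            (q : A → AddCircle (1 : ℝ)) x + (q : A → AddCircle (1 : ℝ)) y) ∧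
         ∀ a : A, (2 : ℕ) • (q : A → AddCircle (1 : ℝ)) a = 0)) :=
  polarization_exact_sequence_general A
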